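/- Let D(u,v,t,m) over F_q be defined via block Vandermonde parity-check rows in primitive m-th roots of unity ζ_i (block rows with exponents 1,…,u; global rows with exponents u+1,…,u+v), where m | q-1. If 2u + v ≤ m - 1, then D(u,0,t,m)^{⊥_E} ⊆ D(u,v,t,m). -/

import Mathlib

/-!
The rows of `parityD m u 0 t ζ` span the Euclidean dual of its kernel, so it suffices that every
row of `parityD m u v t ζ` is orthogonal to every row of `parityD m u 0 t ζ`. Restricted to a block
`a`, a row is a multiple of `(ζ a ^ (k * b))_b` with `k ≤ u + v`, and a block row has exponent
`j + 1 ≤ u`; their dot product is a multiple of the geometric sum `∑_b (ζ a ^ (k + j + 1)) ^ b`,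
which vanishes because `0 < k + j + 1 < m = orderOf (ζ a)`.
-/

/-- The parity-check matrix of the code D(u,v,t,m) over F_q. -/
def parityD (m u v t : ℕ) {F : Type*} [Field F] (ζ : Fin t → F) :
    Matrix ((Fin t × Fin u) ⊕ Fin v) (Fin t × Fin m) F :=
  fun r c =>
    match r with
    | Sum.inl (i, j) => if c.1 = i then ζ i ^ ((j.val + 1) * c.2.val) else 0
    | Sum.inr j => ζ c.1 ^ ((u + j.val + 1) * c.2.val)

open Matrix LinearMap LinearMap.BilinForm Finset

section DotProduct

variable {K n ι κ : Type*} [Field K] [Fintype n] [Fintype ι]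

lemma nondegenerate_dotProductBilin :
    (dotProductBilin K K : LinearMap.BilinForm K (n → K)).Nondegenerate :=
  ⟨fun x hx => dotProduct_eq_zero x hx,
    fun y hy => dotProduct_eq_zero y fun x => (dotProduct_comm y x).trans (hy x)⟩

lemma isRefl_dotProductBilin :
    BilinForm.IsRefl (dotProductBilin K K : LinearMap.BilinForm K (n → K)) :=
  fun x y hxy => (dotProduct_comm y x).trans hxy

lemma orthogonal_range_mulVecLin_transpose (H : Matrix ι n K) :
    BilinForm.orthogonal (dotProductBilin K K) (range Hᵀ.mulVecLin) = ker H.mulVecLin := by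
  ext y
  simp only [mem_orthogonal_iff, LinearMap.mem_range, forall_exists_index, forall_apply_eq_imp_iff,
    dotProductBilin_apply_apply, mulVecLin_apply, mulVec_transpose, ← dotProduct_mulVec, mem_ker]
  simp_rw [dotProduct_comm _ (H *ᵥ y)]
  exact dotProduct_eq_zero_iff

theorem mem_range_mulVecLin_transpose_of_orthogonal_ker (H : Matrix ι n K) {x : n → K}
    (hx : ∀ y ∈ ker H.mulVecLin, x ⬝ᵥ y = 0) : x ∈ range Hᵀ.mulVecLin := by
  rw [← BilinForm.orthogonal_orthogonal nondegenerate_dotProductBilin isRefl_dotProductBilin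
    (range Hᵀ.mulVecLin), orthogonal_range_mulVecLin_transpose]
  exact fun y hy => (dotProduct_comm y x).trans (hx y hy)

theorem mem_ker_mulVecLin_of_orthogonal_ker {G : Matrix κ n K} {H : Matrix ι n K}
    (hGH : G * Hᵀ = 0) {x : n → K} (hx : ∀ y ∈ ker H.mulVecLin, x ⬝ᵥ y = 0) :
    x ∈ ker G.mulVecLin := by
  obtain ⟨w, rfl⟩ := mem_range_mulVecLin_transpose_of_orthogonal_ker H hx
  rw [mem_ker, mulVecLin_apply, mulVecLin_apply, mulVec_mulVec, hGH, zero_mulVec]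

end DotProduct

theorem sum_pow_mul_eq_zero_of_lt_orderOf {M : Type*} [Field M] {ζ : M} {m k : ℕ}
    (hζ : orderOf ζ = m) (hk : 0 < k) (hkm : k < m) : ∑ b : Fin m, ζ ^ (k * b) = 0 := by
  have hne : ζ ^ k ≠ 1 := pow_ne_one_of_lt_orderOf hk.ne' (hζ ▸ hkm)
  have hpow : (ζ ^ k) ^ m = 1 := by
    rw [← pow_mul, mul_comm, pow_mul, ← hζ, pow_orderOf_eq_one, one_pow]
  simp_rw [pow_mul]
  rw [Fin.sum_univ_eq_sum_range (fun b => (ζ ^ k) ^ b), geom_sum_eq hne, hpow, sub_self, zero_div]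

section ParityCheck

variable {F : Type*} [Field F] {m u v t : ℕ} (ζ : Fin t → F)

lemma exists_parityD_apply_eq_mul_pow (r : (Fin t × Fin u) ⊕ Fin v) (a : Fin t) :
    ∃ s : F, ∃ k ≤ u + v, ∀ b : Fin m, parityD m u v t ζ r (a, b) = s * ζ a ^ (k * b) := by
  rcases r with ⟨i, j⟩ | j
  · refine ⟨if a = i then 1 else 0, j + 1, by omega, fun b => ?_⟩
    by_cases h : a = i
    · subst h; simp [parityD]
    · simp [parityD, h]
  · exact ⟨1, u + j + 1, by omega, fun b => (one_mul _).symm⟩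

theorem parityD_mul_transpose_parityD_zero (huv : 2 * u + v ≤ m - 1)
    (hζ : ∀ i, orderOf (ζ i) = m) : parityD m u v t ζ * (parityD m u 0 t ζ)ᵀ = 0 := by
  ext r r'
  rcases r' with ⟨i, j⟩ | j
  swap
  · exact j.elim0
  obtain ⟨s, k, hk, hrow⟩ := exists_parityD_apply_eq_mul_pow (m := m) ζ r i
  calc (parityD m u v t ζ * (parityD m u 0 t ζ)ᵀ) r (.inl (i, j))
      = ∑ b : Fin m, parityD m u v t ζ r (i, b) * ζ i ^ ((j.val + 1) * b.val) := by
        rw [mul_apply, Fintype.sum_prod_type, sum_eq_single i]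
        · simp [parityD]
        · intro a _ ha
          simp [parityD, ha]
        · simp
    _ = s * ∑ b : Fin m, ζ i ^ ((k + (j.val + 1)) * b.val) := by
        rw [mul_sum]
        refine sum_congr rfl fun b _ => ?_
        rw [hrow, mul_assoc, ← pow_add, ← add_mul]
    _ = 0 := by
        rw [sum_pow_mul_eq_zero_of_lt_orderOf (hζ i) (by omega) (by omega), mul_zero]

end ParityCheck

theorem stmt_12_general (m u v t : ℕ)
    (huv : 2 * u + v ≤ m - 1)
    {F : Type*} [Field F]
    (ζ : Fin t → F) (hζ : ∀ i, orderOf (ζ i) = m) :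
    ∀ x : Fin t × Fin m → F,
      (∀ y ∈ LinearMap.ker (parityD m u 0 t ζ).mulVecLin, ∑ c, x c * y c = 0) →
      x ∈ LinearMap.ker (parityD m u v t ζ).mulVecLin :=
  fun _ hx => mem_ker_mulVecLin_of_orthogonal_ker (parityD_mul_transpose_parityD_zero ζ huv hζ) hx

/-- if 2u + v ≤ m - 1, then the Euclidean dual of D(u,0,t,m) is
contained in D(u,v,t,m). -/
theorem stmt_12 (p e q m u v t : ℕ) (hp : p.Prime) (he : 0 < e) (hq : q = p ^ e)
    (hq5 : 5 ≤ q) (hm : m ∣ q - 1) (hu : 1 ≤ u) (ht : 1 ≤ t) (hvu : v ≤ u)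
    (huv : 2 * u + v ≤ m - 1)
    {F : Type*} [Field F] [Fintype F] [DecidableEq F]
    (hF : Fintype.card F = q)
    (ζ : Fin t → F) (hζ : ∀ i, orderOf (ζ i) = m) :
    ∀ x : Fin t × Fin m → F,
      (∀ y ∈ LinearMap.ker (parityD m u 0 t ζ).mulVecLin, ∑ c, x c * y c = 0) →
      x ∈ LinearMap.ker (parityD m u v t ζ).mulVecLin :=
  stmt_12_general m u v t huv ζ hζ
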